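/- Let K be a field, let K[s,t,x,y] be the polynomial ring in four variables, and let Q_n(s,t) ∈ K[s,t] be defined by Q_0 = 1, Q_1 = t, and Q_{n+2} = t·Q_{n+1} − s^2·Q_n for n ≥ 0. Then for all integers m ≥ 1 and n ≥ 1, the colon ideal (x^n, y^n, sx^2+txy+sy^2) : (s^m·x·y^{n−1}) in K[s,t,x,y] equals the ideal (x, y, Q_{n−1}). -/

import Mathlib

/-!
Write `f = s x² + t x y + s y²`, `I = (xⁿ, yⁿ, f)` and `T = sᵐ x yⁿ⁻¹`. Both `x T` and `y T` lie
visibly in `I`, and for an explicit cofactor `G_N` one has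
`f G_N = s Q_{N+1} x y^{N+1} + s² Q_N y^{N+2} ± s^{N+2} x^{N+2}`, so `Q_{n-1} T ∈ I` as soon as
`s ∣ sᵐ`.

Conversely, if `g T ∈ I`, then so is `c T` for the part `c ∈ K[s,t]` of `g` free of `x, y`.
Viewing `s, t` as coefficients, compare the coefficients of `x^{j+2} y^{n-2-j}` in
`c sᵐ x yⁿ⁻¹ = U xⁿ + V yⁿ + H f`: the coefficients `w_j` of `x^j y^{n-2-j}` in `H` satisfy the
tridiagonal system `s w_j + t w_{j+1} + s w_{j+2} = 0`, with first row `t w_0 + s w_1 = c sᵐ`.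
Eliminating from the last row up gives `Q_{n-1} w_0 = Q_{n-2} sᵐ c`. Consecutive `Q_k` are
coprime and `s ∤ Q_k` (at `s = 0`, `Q_k = t^k`), hence `Q_{n-1} ∣ c`.
-/

open MvPolynomial

/-- The polynomials `Q₀ = 1`, `Q₁ = t`, `Q_{n+2} = t·Q_{n+1} − s²·Q_n`, viewed in the polynomial
ring `K[s,t,x,y]` where `s = X 0`, `t = X 1`, `x = X 2`, `y = X 3`. -/
noncomputable def Qpoly (K : Type) [Field K] : ℕ → MvPolynomial (Fin 4) K
  | 0 => 1
  | 1 => X 1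
  | n + 2 => X 1 * Qpoly K (n + 1) - X 0 ^ 2 * Qpoly K n

section TridiagonalSystem

variable {A : Type*} [CommRing A]

noncomputable def bidegree (i j : ℕ) : Fin 2 →₀ ℕ := Finsupp.single 0 i + Finsupp.single 1 j

@[simp] lemma bidegree_apply_zero (i j : ℕ) : bidegree i j 0 = i := by simp [bidegree]

@[simp] lemma bidegree_apply_one (i j : ℕ) : bidegree i j 1 = j := by
  simp [bidegree]

lemma bidegree_le_bidegree {i j a b : ℕ} : bidegree i j ≤ bidegree a b ↔ i ≤ a ∧ j ≤ b := by
  refine ⟨fun h => ⟨by simpa using h 0, by simpa using h 1⟩, fun ⟨hi, hj⟩ k => ?_⟩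
  fin_cases k <;> simpa

lemma bidegree_sub_bidegree (a b i j : ℕ) :
    bidegree a b - bidegree i j = bidegree (a - i) (b - j) := by
  ext k
  fin_cases k <;> simp

lemma bidegree_inj {i j a b : ℕ} : bidegree i j = bidegree a b ↔ i = a ∧ j = b := by
  refine ⟨fun h => ⟨by simpa using congrArg (· 0) h, by simpa using congrArg (· 1) h⟩, ?_⟩
  rintro ⟨rfl, rfl⟩
  rfl

lemma monomial_bidegree (i j : ℕ) (r : A) :
    (monomial (bidegree i j) r : MvPolynomial (Fin 2) A) = C r * X 0 ^ i * X 1 ^ j := by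
  rw [C_apply, X_pow_eq_monomial, X_pow_eq_monomial, monomial_mul, monomial_mul]
  simp [bidegree]

lemma coeff_bidegree_monomial_mul (a b i j : ℕ) (r : A) (p : MvPolynomial (Fin 2) A) :
    coeff (bidegree a b) (monomial (bidegree i j) r * p) =
      if i ≤ a ∧ j ≤ b then r * coeff (bidegree (a - i) (b - j)) p else 0 := by
  rw [coeff_monomial_mul', bidegree_sub_bidegree]
  simp [bidegree_le_bidegree]

lemma coeff_bidegree_monomial (a b i j : ℕ) (r : A) :
    coeff (bidegree a b) (monomial (bidegree i j) r) = if i = a ∧ j = b then r else 0 := by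
  rw [coeff_monomial]
  simp [bidegree_inj, eq_comm]

noncomputable def homogeneousCoeff (N : ℕ) (H : MvPolynomial (Fin 2) A) (j : ℕ) : A :=
  if j ≤ N then coeff (bidegree j (N - j)) H else 0

section Rows

variable {s t a : A} {N : ℕ} {H U V : MvPolynomial (Fin 2) A}

lemma monomial_form_of_relation
    (hrel : C a * X 0 * X 1 ^ (N + 1) = U * X 0 ^ (N + 2) + V * X 1 ^ (N + 2) +
      H * (C s * X 0 ^ 2 + C t * X 0 * X 1 + C s * X 1 ^ 2)) :
    (monomial (bidegree 1 (N + 1)) a : MvPolynomial (Fin 2) A) =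
      monomial (bidegree 2 0) s * H + monomial (bidegree 1 1) t * H +
        monomial (bidegree 0 2) s * H + monomial (bidegree (N + 2) 0) 1 * U +
          monomial (bidegree 0 (N + 2)) 1 * V := by
  simp only [monomial_bidegree, map_one]
  linear_combination hrel

lemma homogeneousCoeff_first_row
    (hrel : C a * X 0 * X 1 ^ (N + 1) = U * X 0 ^ (N + 2) + V * X 1 ^ (N + 2) +
      H * (C s * X 0 ^ 2 + C t * X 0 * X 1 + C s * X 1 ^ 2)) :
    t * homogeneousCoeff N H 0 + s * homogeneousCoeff N H 1 = a := by
  have h := congrArg (coeff (bidegree 1 (N + 1))) (monomial_form_of_relation hrel)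
  simp only [coeff_add, coeff_bidegree_monomial_mul, coeff_bidegree_monomial, Nat.sub_zero,
    Nat.sub_self, Nat.add_sub_cancel, and_self, if_true] at h
  rw [show N + 1 - 2 = N - 1 by omega] at h
  unfold homogeneousCoeff
  split_ifs at h ⊢ <;> first | omega | linear_combination -h

lemma homogeneousCoeff_middle_row
    (hrel : C a * X 0 * X 1 ^ (N + 1) = U * X 0 ^ (N + 2) + V * X 1 ^ (N + 2) +
      H * (C s * X 0 ^ 2 + C t * X 0 * X 1 + C s * X 1 ^ 2)) {j : ℕ} (hj : j + 1 ≤ N) :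
    s * homogeneousCoeff N H j + t * homogeneousCoeff N H (j + 1) +
      s * homogeneousCoeff N H (j + 2) = 0 := by
  have h := congrArg (coeff (bidegree (j + 2) (N - j))) (monomial_form_of_relation hrel)
  simp only [coeff_add, coeff_bidegree_monomial_mul, coeff_bidegree_monomial, Nat.sub_zero,
    Nat.add_sub_cancel] at h
  rw [show j + 2 - 1 = j + 1 by omega, show N - j - 1 = N - (j + 1) by omega,
    show N - j - 2 = N - (j + 2) by omega] at h
  unfold homogeneousCoeff
  split_ifs at h ⊢ <;> first | omega | linear_combination h | linear_combination -h

end Rows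

lemma tridiagonal_elimination (s t : A) (q w : ℕ → A) (N : ℕ)
    (hq0 : q 0 = 1) (hq1 : q 1 = t) (hq : ∀ k, q (k + 2) = t * q (k + 1) - s ^ 2 * q k)
    (hw : ∀ j, j + 1 ≤ N → s * w j + t * w (j + 1) + s * w (j + 2) = 0)
    (hw_top : ∀ j, N < j → w j = 0) :
    q (N + 1) * w 0 = q N * (t * w 0 + s * w 1) := by
  -- row reduction from the last row up: after `r + 1` steps row `j` only involves `w j, w (j + 1)`
  have reduced : ∀ r j, j + r + 1 = N → q (r + 1) * w (j + 1) + s * q r * w j = 0 := by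
    intro r
    induction r with
    | zero =>
      intro j hj
      have hrow := hw j (by omega)
      rw [hw_top (j + 2) (by omega)] at hrow
      rw [hq1, hq0]
      linear_combination hrow
    | succ r ih =>
      intro j hj
      rw [hq]
      linear_combination q (r + 1) * hw j (by omega) - s * ih (j + 1) (by omega)
  cases N with
  | zero =>
    rw [hw_top 1 (by omega), hq0, hq1]
    ring
  | succ N =>
    rw [hq]
    linear_combination (-s) * reduced N 0 (by omega)

lemma homogeneousCoeff_eq_zero {N j : ℕ} (H : MvPolynomial (Fin 2) A) (hj : N < j) :
    homogeneousCoeff N H j = 0 :=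
  if_neg (by omega)

theorem dvd_mul_of_mem_span_X_pow (s t a : A) (q : ℕ → A) (hq0 : q 0 = 1) (hq1 : q 1 = t)
    (hq : ∀ k, q (k + 2) = t * q (k + 1) - s ^ 2 * q k) (n : ℕ)
    (h : C a * X 0 * X 1 ^ (n - 1) ∈ (Ideal.span {X 0 ^ n, X 1 ^ n,
      C s * X 0 ^ 2 + C t * X 0 * X 1 + C s * X 1 ^ 2} : Ideal (MvPolynomial (Fin 2) A))) :
    q (n - 1) ∣ q (n - 2) * a := by
  obtain _ | _ | N := n
  · simp [hq0]
  · simp [hq0]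
  obtain ⟨U, V, H, hUVH⟩ := Submodule.mem_span_triple.mp h
  simp only [smul_eq_mul, Nat.add_sub_cancel] at hUVH
  refine ⟨homogeneousCoeff N H 0, ?_⟩
  rw [← homogeneousCoeff_first_row hUVH.symm]
  exact (tridiagonal_elimination s t q _ N hq0 hq1 hq
    (fun _ => homogeneousCoeff_middle_row hUVH.symm) (fun _ => homogeneousCoeff_eq_zero H)).symm

end TridiagonalSystem

section Recurrence

variable {K : Type} [Field K]

lemma Qpoly_add_two (k : ℕ) :
    Qpoly K (k + 2) = X 1 * Qpoly K (k + 1) - X 0 ^ 2 * Qpoly K k :=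
  rfl

lemma aeval_Qpoly_X_zero_eq_zero (k : ℕ) :
    aeval (![0, X 1, X 2, X 3] : Fin 4 → MvPolynomial (Fin 4) K) (Qpoly K k) = X 1 ^ k := by
  induction k using Nat.twoStepInduction with
  | zero => simp [Qpoly]
  | one => simp [Qpoly]
  | more k ih₁ ih₂ =>
    rw [Qpoly_add_two, map_sub, map_mul, map_mul, map_pow, ih₁, ih₂]
    simp [pow_succ]
    ring

lemma X_zero_not_dvd_Qpoly (k : ℕ) : ¬ (X 0 : MvPolynomial (Fin 4) K) ∣ Qpoly K k := by
  rintro ⟨d, hd⟩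
  have := congrArg (aeval (![0, X 1, X 2, X 3] : Fin 4 → MvPolynomial (Fin 4) K)) hd
  rw [aeval_Qpoly_X_zero_eq_zero, map_mul] at this
  simp at this

lemma isRelPrime_Qpoly_X_zero (k : ℕ) : IsRelPrime (Qpoly K k) (X 0) :=
  ((X_prime.irreducible).isRelPrime_iff_not_dvd.mpr (X_zero_not_dvd_Qpoly k)).symm

lemma isRelPrime_Qpoly_succ (k : ℕ) : IsRelPrime (Qpoly K (k + 1)) (Qpoly K k) := by
  induction k with
  | zero => exact isRelPrime_one_right
  | succ k ih =>
    intro d hd₂ hd₁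
    have hd : d ∣ X 0 ^ 2 * Qpoly K k := by
      rw [show X 0 ^ 2 * Qpoly K k = X 1 * Qpoly K (k + 1) - Qpoly K (k + 2) by
        rw [Qpoly_add_two]; ring]
      exact dvd_sub (hd₁.mul_left _) hd₂
    exact (((isRelPrime_Qpoly_X_zero (k + 1)).pow_right).mul_right ih) hd₁ hd

lemma isRelPrime_Qpoly_pred (k : ℕ) : IsRelPrime (Qpoly K k) (Qpoly K (k - 1)) := by
  cases k with
  | zero => exact isRelPrime_one_left
  | succ k => exact isRelPrime_Qpoly_succ k

noncomputable def cofactor (K : Type) [Field K] : ℕ → MvPolynomial (Fin 4) K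
  | 0 => X 0
  | N + 1 => X 0 * (Qpoly K (N + 1) * X 3 ^ (N + 1) - X 2 * cofactor K N)

lemma mul_cofactor (N : ℕ) :
    (X 0 * X 2 ^ 2 + X 1 * X 2 * X 3 + X 0 * X 3 ^ 2) * cofactor K N =
      X 0 * Qpoly K (N + 1) * X 2 * X 3 ^ (N + 1) + X 0 ^ 2 * Qpoly K N * X 3 ^ (N + 2) +
        (-1) ^ N * X 0 ^ (N + 2) * X 2 ^ (N + 2) := by
  induction N with
  | zero => simp only [cofactor, Qpoly]; ring
  | succ N ih =>
    rw [cofactor, Qpoly_add_two]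
    linear_combination (-(X 0 * X 2)) * ih

end Recurrence

section ColonIdeal

variable {K : Type} [Field K]

lemma span_le_colon (m n : ℕ) (hm : 1 ≤ m) :
    Ideal.span {X 2, X 3, Qpoly K (n - 1)} ≤
      Submodule.colon
        (Ideal.span {X 2 ^ n, X 3 ^ n,
          X 0 * X 2 ^ 2 + X 1 * X 2 * X 3 + X 0 * X 3 ^ 2} : Ideal (MvPolynomial (Fin 4) K))
        ((Ideal.span {X 0 ^ m * X 2 * X 3 ^ (n - 1)} : Ideal (MvPolynomial (Fin 4) K)) :
          Set (MvPolynomial (Fin 4) K)) := by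
  obtain ⟨M, rfl⟩ : ∃ M, m = M + 1 := ⟨m - 1, by omega⟩
  rw [Ideal.span_le]
  intro g hg
  rw [SetLike.mem_coe, Ideal.mem_colon_span_singleton, Submodule.mem_span_triple]
  simp only [smul_eq_mul]
  rcases n with _ | k
  · exact ⟨g * X 0 ^ (M + 1) * X 2, 0, 0, by ring⟩
  simp only [Set.mem_insert_iff, Set.mem_singleton_iff, Nat.add_sub_cancel] at hg ⊢
  rcases hg with rfl | rfl | rfl
  · exact ⟨0, -(X 0 ^ M * (X 1 * X 2 + X 0 * X 3)), X 0 ^ M * X 3 ^ k, by ring⟩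
  · exact ⟨0, X 0 ^ (M + 1) * X 2, 0, by ring⟩
  · rcases k with _ | N
    · exact ⟨X 0 ^ (M + 1), 0, 0, by simp only [Qpoly]; ring⟩
    · refine ⟨-((-1) ^ N * X 0 ^ M * X 0 ^ (N + 2)), -(X 0 ^ M * X 0 ^ 2 * Qpoly K N),
        X 0 ^ M * cofactor K N, ?_⟩
      linear_combination X 0 ^ M * mul_cofactor (K := K) N

noncomputable def setXYZero (K : Type) [Field K] :
    MvPolynomial (Fin 4) K →ₐ[K] MvPolynomial (Fin 4) K :=
  aeval ![X 0, X 1, 0, 0]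

lemma sub_setXYZero_mem (p : MvPolynomial (Fin 4) K) :
    p - setXYZero K p ∈ Ideal.span {X 2, X 3} := by
  rw [← Ideal.Quotient.eq]
  have : Ideal.Quotient.mkₐ K (Ideal.span {X 2, X 3}) =
      (Ideal.Quotient.mkₐ K (Ideal.span {X 2, X 3})).comp (setXYZero K) := by
    ext i
    fin_cases i <;> simp [setXYZero, Ideal.Quotient.eq_zero_iff_mem, Ideal.mem_span_pair]
    exacts [⟨1, 0, by ring⟩, ⟨0, 1, by ring⟩]
  exact congr($this p)

/-- Reads `x, y` as the variables and `s, t` as coefficients. Taking the coefficient ring to be all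
of `K[s,t,x,y]` is harmless: it is only applied to multiples of `x, y`-free polynomials. -/
noncomputable def splitXY (K : Type) [Field K] :
    MvPolynomial (Fin 4) K →ₐ[K] MvPolynomial (Fin 2) (MvPolynomial (Fin 4) K) :=
  aeval ![C (X 0), C (X 1), X 0, X 1]

lemma splitXY_setXYZero (p : MvPolynomial (Fin 4) K) :
    splitXY K (setXYZero K p) = C (setXYZero K p) := by
  have : (splitXY K).comp (setXYZero K) =
      (IsScalarTower.toAlgHom K _ _).comp (setXYZero K) := by
    ext i
    fin_cases i <;> simp [splitXY, setXYZero, algebraMap_eq]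
  exact congr($this p)

lemma colon_le_span (m n : ℕ) (hm : 1 ≤ m) :
    Submodule.colon
        (Ideal.span {X 2 ^ n, X 3 ^ n,
          X 0 * X 2 ^ 2 + X 1 * X 2 * X 3 + X 0 * X 3 ^ 2} : Ideal (MvPolynomial (Fin 4) K))
        ((Ideal.span {X 0 ^ m * X 2 * X 3 ^ (n - 1)} : Ideal (MvPolynomial (Fin 4) K)) :
          Set (MvPolynomial (Fin 4) K)) ≤
      Ideal.span {X 2, X 3, Qpoly K (n - 1)} := by
  intro g hg
  set c := setXYZero K g
  have hle : Ideal.span {X 2, X 3} ≤ Ideal.span {X 2, X 3, Qpoly K (n - 1)} :=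
    Ideal.span_mono (by simp)
  have hc := sub_mem hg (span_le_colon m n hm (hle (sub_setXYZero_mem g)))
  rw [sub_sub_cancel] at hc
  have hsplit : C (X 0 ^ m * c) * X 0 * X 1 ^ (n - 1) ∈
      (Ideal.span {X 0 ^ n, X 1 ^ n,
        C (X 0) * X 0 ^ 2 + C (X 1) * X 0 * X 1 + C (X 0) * X 1 ^ 2} :
        Ideal (MvPolynomial (Fin 2) (MvPolynomial (Fin 4) K))) := by
    have h := Ideal.mem_map_of_mem (splitXY K) (Ideal.mem_colon_span_singleton.mp hc)
    rw [Ideal.map_span] at h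
    convert h using 1
    · simp [Set.image_insert_eq, splitXY]
    · rw [map_mul (splitXY K), splitXY_setXYZero]
      simp [splitXY]
      ring
  have hdvd := dvd_mul_of_mem_span_X_pow (X 0) (X 1) _ (Qpoly K) rfl rfl Qpoly_add_two n hsplit
  rw [show n - 2 = n - 1 - 1 by omega, ← mul_assoc] at hdvd
  obtain ⟨d, hd⟩ := ((isRelPrime_Qpoly_pred (n - 1)).mul_right
    (isRelPrime_Qpoly_X_zero _).pow_right).dvd_of_dvd_mul_left hdvd
  rw [← sub_add_cancel g c]
  refine add_mem (hle (sub_setXYZero_mem g)) ?_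
  rw [hd]
  exact Ideal.mul_mem_right _ _ (Ideal.subset_span (by simp))

end ColonIdeal

theorem stmt_11_general {K : Type} [Field K] (m n : ℕ) (hm : 1 ≤ m) :
    Submodule.colon
        (Ideal.span {X 2 ^ n, X 3 ^ n,
          X 0 * X 2 ^ 2 + X 1 * X 2 * X 3 + X 0 * X 3 ^ 2} : Ideal (MvPolynomial (Fin 4) K))
        ((Ideal.span {X 0 ^ m * X 2 * X 3 ^ (n - 1)} : Ideal (MvPolynomial (Fin 4) K)) :
          Set (MvPolynomial (Fin 4) K)) =
      Ideal.span {X 2, X 3, Qpoly K (n - 1)} :=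
  le_antisymm (colon_le_span m n hm) (span_le_colon m n hm)

/-- In `K[s,t,x,y]` (with `s = X 0`, `t = X 1`, `x = X 2`, `y = X 3`), for `m, n ≥ 1`:
`(xⁿ, yⁿ, sx² + txy + sy²) : (sᵐ·x·y^{n−1}) = (x, y, Q_{n−1})`. -/
theorem stmt_11 {K : Type} [Field K] (m n : ℕ) (hm : 1 ≤ m) (hn : 1 ≤ n) :
    Submodule.colon
        (Ideal.span {X 2 ^ n, X 3 ^ n,
          X 0 * X 2 ^ 2 + X 1 * X 2 * X 3 + X 0 * X 3 ^ 2} : Ideal (MvPolynomial (Fin 4) K))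
        ((Ideal.span {X 0 ^ m * X 2 * X 3 ^ (n - 1)} : Ideal (MvPolynomial (Fin 4) K)) :
          Set (MvPolynomial (Fin 4) K)) =
      Ideal.span {X 2, X 3, Qpoly K (n - 1)} :=
  stmt_11_general m n hm
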